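/- arXiv:1209.5045 — 3 statements merged into one kernel-verified Lean document; each statement's English description precedes it below -/
import Mathlib

section
/- Let G be a finite undirected graph, U a vertex subset with positive volume, and (L,R) a partition of U. Define ψ_U(v) = √(d(v)/vol(U)) for v ∈ L, ψ_U(v) = -√(d(v)/vol(U)) for v ∈ R, and 0 otherwise, and let 𝓛 = I - D^{-1/2} A D^{-1/2} be the normalized Laplacian. Then ψ_U (2I - 𝓛) ψ_Uᵀ = Σ_{u∼v} (ψ_U(u)/√d(u) + ψ_U(v)/√d(v))² = (4e(L) + 4e(R) + e(U,Ū)) / vol(U). -/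
open Finset Matrix

/-- Quadratic form of `2I - 𝓛` at the signed normalized indicator `ψ_U` of a
pair subgraph `U = (L,R)` equals the edge sum
`Σ_{u∼v} (ψ_U(u)/√d(u) + ψ_U(v)/√d(v))²`, which equals
`(4e(L) + 4e(R) + e(U,Ū)) / vol(U)`. -/
theorem quadform_two_sub_lap_eq {V : Type*} [Fintype V] [DecidableEq V]
    (A : Matrix V V ℝ) (hA : A.IsSymm) (hA0 : ∀ v u, 0 ≤ A v u)
    (d : V → ℝ) (hd : ∀ v, d v = ∑ u, A v u) (hd0 : ∀ v, 0 < d v)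
    (L R : Finset V) (hLR : Disjoint L R) (U : Finset V) (hU : U = L ∪ R)
    (volU : ℝ) (hvolU : volU = ∑ v ∈ U, d v) (hvolU0 : 0 < volU)
    (ψ : V → ℝ)
    (hψ : ∀ v, ψ v = if v ∈ L then Real.sqrt (d v / volU)
      else if v ∈ R then -Real.sqrt (d v / volU) else 0)
    (𝓛 : Matrix V V ℝ)
    (h𝓛 : ∀ v u, 𝓛 v u = (if v = u then 1 else 0)
      - A v u / (Real.sqrt (d v) * Real.sqrt (d u)))
    (eL eR eOut : ℝ)
    (heL : eL = (∑ u ∈ L, ∑ v ∈ L, A u v) / 2)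
    (heR : eR = (∑ u ∈ R, ∑ v ∈ R, A u v) / 2)
    (heOut : eOut = ∑ u ∈ U, ∑ v ∈ Uᶜ, A u v) :
    ψ ᵥ* ((2 : ℝ) • (1 : Matrix V V ℝ) - 𝓛) ⬝ᵥ ψ
        = (∑ u, ∑ v, A u v * (ψ u / Real.sqrt (d u) + ψ v / Real.sqrt (d v)) ^ 2) / 2
      ∧ ψ ᵥ* ((2 : ℝ) • (1 : Matrix V V ℝ) - 𝓛) ⬝ᵥ ψ
        = (4 * eL + 4 * eR + eOut) / volU := by
  have hsqd : ∀ u, Real.sqrt (d u) ≠ 0 := fun u => Real.sqrt_ne_zero'.2 (hd0 u)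
  have hsv : Real.sqrt volU ≠ 0 := Real.sqrt_ne_zero'.2 hvolU0
  have hvne : volU ≠ 0 := ne_of_gt hvolU0
  set s : V → ℝ := fun u => ψ u / Real.sqrt (d u) with hs
  -- s is ±1/√volU on L, R and 0 elsewhere
  have hse : ∀ u, s u = (if u ∈ L then (1:ℝ) else if u ∈ R then -1 else 0)
      / Real.sqrt volU := by
    intro u
    simp only [hs, hψ u]
    split_ifs with h1 h2
    · rw [Real.sqrt_div (le_of_lt (hd0 u)), div_right_comm, div_self (hsqd u)]
    · rw [Real.sqrt_div (le_of_lt (hd0 u)), ← neg_div, div_right_comm, neg_div,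
        div_self (hsqd u)]
    · simp
  -- ψ² is the indicator of U times d/volU
  have hψsq : ∀ u, ψ u ^ 2 = if u ∈ U then d u / volU else 0 := by
    intro u
    have hnn : 0 ≤ d u / volU := le_of_lt (div_pos (hd0 u) hvolU0)
    rw [hψ u]
    by_cases h1 : u ∈ L
    · simp [h1, hU, Finset.mem_union, Real.sq_sqrt hnn]
    · by_cases h2 : u ∈ R
      · simp [h1, h2, hU, Finset.mem_union, neg_sq, Real.sq_sqrt hnn]
      · simp [h1, h2, hU, Finset.mem_union]
  -- quadratic form expansion
  have hQ : ψ ᵥ* ((2 : ℝ) • (1 : Matrix V V ℝ) - 𝓛) ⬝ᵥ ψ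
      = (∑ u, ψ u ^ 2) + ∑ u, ∑ v, A u v * (s u * s v) := by
    have hterm : ∀ u v, ψ u * ((2 : ℝ) • (1 : Matrix V V ℝ) - 𝓛) u v * ψ v
        = (if u = v then ψ u * ψ v else 0) + A u v * (s u * s v) := by
      intro u v
      have : s u * s v = ψ u * ψ v / (Real.sqrt (d u) * Real.sqrt (d v)) := by
        simp only [hs]
        rw [div_mul_div_comm]
      rw [this]
      simp only [Matrix.sub_apply, Matrix.smul_apply, Matrix.one_apply, h𝓛 u v, smul_eq_mul]
      split_ifs with h
      · field_simp
        try ring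
      · field_simp
        try ring
    simp only [dotProduct, Matrix.vecMul, Finset.sum_mul]
    rw [Finset.sum_comm]
    have : ∀ u, ∑ v, ψ u * ((2 : ℝ) • (1 : Matrix V V ℝ) - 𝓛) u v * ψ v
        = ψ u ^ 2 + ∑ v, A u v * (s u * s v) := by
      intro u
      simp only [hterm]
      rw [Finset.sum_add_distrib, Finset.sum_ite_eq Finset.univ u (fun v => ψ u * ψ v)]
      simp [sq]
    simp only [this, Finset.sum_add_distrib]
  -- first equality
  have h1 : (∑ u, ∑ v, A u v * (s u + s v) ^ 2) / 2
      = (∑ u, ψ u ^ 2) + ∑ u, ∑ v, A u v * (s u * s v) := by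
    have expand : ∀ u v, A u v * (s u + s v) ^ 2
        = A u v * s u ^ 2 + A u v * s v ^ 2 + 2 * (A u v * (s u * s v)) := by
      intros; ring
    simp only [expand, Finset.sum_add_distrib]
    have hdiag : ∀ u, s u ^ 2 * d u = ψ u ^ 2 := by
      intro u
      simp only [hs]
      rw [div_pow, Real.sq_sqrt (le_of_lt (hd0 u)), div_mul_cancel₀ _ (ne_of_gt (hd0 u))]
    have hA1 : ∑ u, ∑ v, A u v * s u ^ 2 = ∑ u, ψ u ^ 2 := by
      refine Finset.sum_congr rfl fun u _ => ?_
      rw [← Finset.sum_mul, ← hd u, mul_comm, hdiag u]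
    have hA2 : ∑ u, ∑ v, A u v * s v ^ 2 = ∑ u, ψ u ^ 2 := by
      rw [Finset.sum_comm]
      refine Finset.sum_congr rfl fun v _ => ?_
      have : ∀ u, A u v = A v u := fun u => hA.apply v u
      simp only [this]
      rw [← Finset.sum_mul, ← hd v, mul_comm, hdiag v]
    rw [hA1, hA2]
    have h2 : ∑ u, ∑ v, 2 * (A u v * (s u * s v))
        = 2 * ∑ u, ∑ v, A u v * (s u * s v) := by
      simp [Finset.mul_sum]
    rw [h2]
    ring
  -- indicator sum lemma
  have hind : ∀ f : V → ℝ,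
      ∑ u, (if u ∈ L then (1:ℝ) else if u ∈ R then -1 else 0) * f u
        = (∑ u ∈ L, f u) - ∑ u ∈ R, f u := by
    intro f
    have : ∀ u, (if u ∈ L then (1:ℝ) else if u ∈ R then -1 else 0) * f u
        = (if u ∈ L then f u else 0) - (if u ∈ R then f u else 0) := by
      intro u
      split_ifs with h1 h2
      · exact absurd h2 (Finset.disjoint_left.mp hLR h1)
      · ring
      · ring
      · ring
    simp only [this, Finset.sum_sub_distrib, Finset.sum_ite_mem, Finset.univ_inter]
  -- cross term
  have hcross : ∑ u, ∑ v, A u v * (s u * s v)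
      = ((∑ u ∈ L, ∑ v ∈ L, A u v) + (∑ u ∈ R, ∑ v ∈ R, A u v)
          - (∑ u ∈ L, ∑ v ∈ R, A u v) - (∑ u ∈ R, ∑ v ∈ L, A u v)) / volU := by
    have hterm : ∀ u v, A u v * (s u * s v)
        = ((if u ∈ L then (1:ℝ) else if u ∈ R then -1 else 0)
            * ((if v ∈ L then (1:ℝ) else if v ∈ R then -1 else 0) * A u v)) / volU := by
      intro u v
      rw [hse u, hse v]
      rw [div_mul_div_comm, Real.mul_self_sqrt (le_of_lt hvolU0)]
      ring
    simp only [hterm, ← Finset.sum_div]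
    congr 1
    have inner : ∀ u, ∑ v, (if u ∈ L then (1:ℝ) else if u ∈ R then -1 else 0)
          * ((if v ∈ L then (1:ℝ) else if v ∈ R then -1 else 0) * A u v)
        = (if u ∈ L then (1:ℝ) else if u ∈ R then -1 else 0)
          * ((∑ v ∈ L, A u v) - ∑ v ∈ R, A u v) := by
      intro u
      rw [← Finset.mul_sum, hind (fun v => A u v)]
    simp only [inner]
    rw [hind (fun u => (∑ v ∈ L, A u v) - ∑ v ∈ R, A u v)]
    simp only [Finset.sum_sub_distrib]
    ring
  -- sum of ψ² is 1
  have hone : ∑ u, ψ u ^ 2 = 1 := by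
    simp only [hψsq, Finset.sum_ite_mem, Finset.univ_inter, ← Finset.sum_div, ← hvolU]
    exact div_self hvne
  -- volume decomposition
  have hvol : volU = (∑ u ∈ L, ∑ v ∈ L, A u v) + (∑ u ∈ L, ∑ v ∈ R, A u v)
      + (∑ u ∈ R, ∑ v ∈ L, A u v) + (∑ u ∈ R, ∑ v ∈ R, A u v) + eOut := by
    have hsplit : ∀ u, d u = (∑ v ∈ U, A u v) + ∑ v ∈ Uᶜ, A u v := by
      intro u
      rw [hd u, ← Finset.sum_add_sum_compl U (fun v => A u v)]
    calc volU = ∑ u ∈ U, d u := hvolU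
      _ = (∑ u ∈ U, ∑ v ∈ U, A u v) + ∑ u ∈ U, ∑ v ∈ Uᶜ, A u v := by
          simp only [hsplit, Finset.sum_add_distrib]
      _ = _ := by
          rw [← heOut, hU, Finset.sum_union hLR]
          simp only [Finset.sum_union hLR, Finset.sum_add_distrib]
          ring
  constructor
  · rw [hQ, ← h1]
  · rw [hQ, hone, hcross, heL, heR]
    field_simp
    linear_combination 2 * hvol
end

section
/- Let G be a finite undirected graph, (L,R) disjoint vertex subsets with U = L ∪ R of positive volume, and suppose β(L,R) = (2e(L) + 2e(R) + e(U,Ū)) / vol(U) ≤ θ. Then with ψ_U as above and 𝓛 the normalized Laplacian, ψ_U 𝓛 ψ_Uᵀ ≥ 2 - 2θ. -/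
/-!
Write `ψ = D^{1/2} χ / √vol(U)` with `χ = 𝟙_L - 𝟙_R`. Since `𝓛 = I - D^{-1/2} A D^{-1/2}`,
`ψ 𝓛 ψᵀ = (χ D χᵀ - χ A χᵀ) / vol(U)`, and with `e(S,T) = ∑_{S × T} A` (ordered pairs, so the
paper's `e(L)` is `e(L,L) / 2`) this is
`(vol(U) - e(L,L) - e(R,R) + e(L,R) + e(R,L)) / vol(U)`.
Splitting `vol(U) = e(U,U) + e(U,Ū)` turns it into `2 - (2 e(L,L) + 2 e(R,R) + e(U,Ū)) / vol(U)`,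
which is at least `2 - 2 β(L,R)` because `e(U,Ū) ≥ 0`.
-/

open Finset Matrix

section

variable {V : Type*}

def edgeWeight (A : Matrix V V ℝ) (S T : Finset V) : ℝ := ∑ u ∈ S, ∑ v ∈ T, A u v

theorem edgeWeight_nonneg {A : Matrix V V ℝ} (hA0 : ∀ v u, 0 ≤ A v u) (S T : Finset V) :
    0 ≤ edgeWeight A S T :=
  sum_nonneg fun u _ => sum_nonneg fun v _ => hA0 u v

theorem edgeWeight_union_union [DecidableEq V] {L R : Finset V} (hLR : Disjoint L R)
    (A : Matrix V V ℝ) :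
    edgeWeight A (L ∪ R) (L ∪ R) =
      edgeWeight A L L + edgeWeight A L R + edgeWeight A R L + edgeWeight A R R := by
  simp only [edgeWeight, sum_union hLR, sum_add_distrib]
  ring

theorem sum_degree_eq_edgeWeight_add [Fintype V] [DecidableEq V] {A : Matrix V V ℝ}
    {d : V → ℝ} (hd : ∀ v, d v = ∑ u, A v u) (U : Finset V) :
    ∑ v ∈ U, d v = edgeWeight A U U + edgeWeight A U Uᶜ := by
  simp only [edgeWeight, hd, ← sum_add_distrib, sum_add_sum_compl]

theorem indicator_vecMul_dotProduct_indicator [Fintype V] (A : Matrix V V ℝ) (S T : Finset V) :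
    (S : Set V).indicator 1 ᵥ* A ⬝ᵥ (T : Set V).indicator 1 = edgeWeight A S T := by
  classical
  simp only [edgeWeight, dotProduct, vecMul, Set.indicator_apply, Finset.mem_coe, Pi.one_apply,
    mul_ite, mul_one, mul_zero, ite_mul, one_mul, zero_mul, sum_ite_mem, univ_inter]
  rw [sum_comm]

noncomputable def signedIndicator (L R : Finset V) : V → ℝ :=
  (L : Set V).indicator 1 - (R : Set V).indicator 1

theorem signedIndicator_apply [DecidableEq V] {L R : Finset V} (hLR : Disjoint L R) (v : V) :
    signedIndicator L R v = if v ∈ L then 1 else if v ∈ R then -1 else 0 := by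
  by_cases hL : v ∈ L
  · have hR : v ∉ R := disjoint_left.mp hLR hL
    simp [signedIndicator, hL, hR]
  · by_cases hR : v ∈ R <;> simp [signedIndicator, hL, hR]

theorem sum_mul_signedIndicator_sq [Fintype V] [DecidableEq V] {L R : Finset V}
    (hLR : Disjoint L R) (f : V → ℝ) :
    ∑ v, f v * signedIndicator L R v ^ 2 = ∑ v ∈ L ∪ R, f v := by
  calc ∑ v, f v * signedIndicator L R v ^ 2 = ∑ v, if v ∈ L ∪ R then f v else 0 :=
        sum_congr rfl fun v _ => by
          simp only [signedIndicator_apply hLR, mem_union]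
          split_ifs <;> simp_all
    _ = ∑ v ∈ L ∪ R, f v := by rw [sum_ite_mem, univ_inter]

theorem signedIndicator_vecMul_dotProduct [Fintype V] (A : Matrix V V ℝ) (L R : Finset V) :
    signedIndicator L R ᵥ* A ⬝ᵥ signedIndicator L R =
      edgeWeight A L L - edgeWeight A L R - edgeWeight A R L + edgeWeight A R R := by
  simp only [signedIndicator, sub_vecMul, sub_dotProduct, dotProduct_sub,
    indicator_vecMul_dotProduct_indicator]
  ring

theorem normLap_eq [Fintype V] [DecidableEq V] {A 𝓛 : Matrix V V ℝ} {d : V → ℝ}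
    (h𝓛 : ∀ v u, 𝓛 v u = (if v = u then 1 else 0) - A v u / (√(d v) * √(d u))) :
    𝓛 = 1 - diagonal (fun v => (√(d v))⁻¹) * A * diagonal (fun v => (√(d v))⁻¹) := by
  ext v u
  rw [h𝓛, Matrix.sub_apply, one_apply, mul_diagonal, diagonal_mul, div_eq_mul_inv, mul_inv]
  ring

theorem vecMul_normLap_dotProduct [Fintype V] [DecidableEq V] {A 𝓛 : Matrix V V ℝ} {d : V → ℝ}
    (hd0 : ∀ v, 0 < d v)
    (h𝓛 : ∀ v u, 𝓛 v u = (if v = u then 1 else 0) - A v u / (√(d v) * √(d u))) (x : V → ℝ) :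
    (fun v => √(d v) * x v) ᵥ* 𝓛 ⬝ᵥ (fun v => √(d v) * x v) =
      ∑ v, d v * x v ^ 2 - x ᵥ* A ⬝ᵥ x := by
  set ψ : V → ℝ := fun v => √(d v) * x v
  set D := diagonal (fun v => (√(d v))⁻¹)
  have hψD : ψ ᵥ* D = x := funext fun v => by
    rw [vecMul_diagonal, mul_comm, inv_mul_cancel_left₀ (Real.sqrt_pos.2 (hd0 v)).ne']
  have hDψ : D *ᵥ ψ = x := funext fun v => by
    rw [mulVec_diagonal, inv_mul_cancel_left₀ (Real.sqrt_pos.2 (hd0 v)).ne']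
  have hψψ : ψ ⬝ᵥ ψ = ∑ v, d v * x v ^ 2 := sum_congr rfl fun v _ => by
    rw [← Real.sq_sqrt (hd0 v).le]
    ring
  rw [normLap_eq h𝓛, vecMul_sub, vecMul_one, sub_dotProduct, ← vecMul_vecMul, ← vecMul_vecMul,
    ← dotProduct_mulVec, hψD, hDψ, hψψ]

theorem vecMul_normLap_dotProduct_div_sqrt [Fintype V] [DecidableEq V] {A 𝓛 : Matrix V V ℝ}
    {d : V → ℝ} (hd0 : ∀ v, 0 < d v)
    (h𝓛 : ∀ v u, 𝓛 v u = (if v = u then 1 else 0) - A v u / (√(d v) * √(d u)))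
    {c : ℝ} (hc : 0 < c) (y : V → ℝ) :
    (fun v => √(d v / c) * y v) ᵥ* 𝓛 ⬝ᵥ (fun v => √(d v / c) * y v) =
      (∑ v, d v * y v ^ 2 - y ᵥ* A ⬝ᵥ y) / c := by
  have hy : (fun v => √(d v / c) * y v) = fun v => √(d v) * ((√c)⁻¹ • y) v := funext fun v => by
    rw [Real.sqrt_div' _ hc.le, Pi.smul_apply, smul_eq_mul]
    ring
  rw [hy, vecMul_normLap_dotProduct hd0 h𝓛, smul_vecMul, smul_dotProduct, dotProduct_smul]
  simp only [Pi.smul_apply, smul_eq_mul, mul_pow, inv_pow, Real.sq_sqrt hc.le]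
  rw [← mul_assoc, ← mul_inv, Real.mul_self_sqrt hc.le]
  simp only [mul_left_comm (d _), ← mul_sum]
  ring

end

theorem rayleigh_lap_ge_of_bipartiteness_ratio_le_general {V : Type*} [Fintype V] [DecidableEq V]
    (A : Matrix V V ℝ) (hA0 : ∀ v u, 0 ≤ A v u)
    (d : V → ℝ) (hd : ∀ v, d v = ∑ u, A v u) (hd0 : ∀ v, 0 < d v)
    (L R : Finset V) (hLR : Disjoint L R) (U : Finset V) (hU : U = L ∪ R)
    (volU : ℝ) (hvolU : volU = ∑ v ∈ U, d v) (hvolU0 : 0 < volU)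
    (eL eR eOut : ℝ)
    (heL : eL = (∑ u ∈ L, ∑ v ∈ L, A u v) / 2)
    (heR : eR = (∑ u ∈ R, ∑ v ∈ R, A u v) / 2)
    (heOut : eOut = ∑ u ∈ U, ∑ v ∈ Uᶜ, A u v)
    (θ : ℝ) (hβ : (2 * eL + 2 * eR + eOut) / volU ≤ θ)
    (ψ : V → ℝ)
    (hψ : ∀ v, ψ v = if v ∈ L then Real.sqrt (d v / volU)
      else if v ∈ R then -Real.sqrt (d v / volU) else 0)
    (𝓛 : Matrix V V ℝ)
    (h𝓛 : ∀ v u, 𝓛 v u = (if v = u then 1 else 0)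
      - A v u / (Real.sqrt (d v) * Real.sqrt (d u))) :
    2 - 2 * θ ≤ ψ ᵥ* 𝓛 ⬝ᵥ ψ := by
  have hψs : ψ = fun v => √(d v / volU) * signedIndicator L R v := funext fun v => by
    rw [hψ, signedIndicator_apply hLR]
    split_ifs <;> ring
  have hvol : volU = edgeWeight A L L + edgeWeight A L R + edgeWeight A R L + edgeWeight A R R
      + edgeWeight A U Uᶜ := by
    rw [hvolU, sum_degree_eq_edgeWeight_add hd, hU, edgeWeight_union_union hLR]
  have hLL : 2 * eL = edgeWeight A L L := by rw [heL, edgeWeight]; ring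
  have hRR : 2 * eR = edgeWeight A R R := by rw [heR, edgeWeight]; ring
  have hOut : eOut = edgeWeight A U Uᶜ := heOut
  rw [hψs, vecMul_normLap_dotProduct_div_sqrt hd0 h𝓛 hvolU0, sum_mul_signedIndicator_sq hLR,
    signedIndicator_vecMul_dotProduct, ← hU, ← hvolU, le_div_iff₀ hvolU0]
  rw [div_le_iff₀ hvolU0] at hβ
  linarith [edgeWeight_nonneg hA0 U Uᶜ]

/-- If the bipartiteness ratio of `(L,R)` is at most `θ`, then the Rayleigh
quotient of the normalized Laplacian at `ψ_U` is at least `2 - 2θ`. -/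
theorem rayleigh_lap_ge_of_bipartiteness_ratio_le {V : Type*} [Fintype V] [DecidableEq V]
    (A : Matrix V V ℝ) (hA : A.IsSymm) (hA0 : ∀ v u, 0 ≤ A v u)
    (d : V → ℝ) (hd : ∀ v, d v = ∑ u, A v u) (hd0 : ∀ v, 0 < d v)
    (L R : Finset V) (hLR : Disjoint L R) (U : Finset V) (hU : U = L ∪ R)
    (volU : ℝ) (hvolU : volU = ∑ v ∈ U, d v) (hvolU0 : 0 < volU)
    (eL eR eOut : ℝ)
    (heL : eL = (∑ u ∈ L, ∑ v ∈ L, A u v) / 2)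
    (heR : eR = (∑ u ∈ R, ∑ v ∈ R, A u v) / 2)
    (heOut : eOut = ∑ u ∈ U, ∑ v ∈ Uᶜ, A u v)
    (θ : ℝ) (hβ : (2 * eL + 2 * eR + eOut) / volU ≤ θ)
    (ψ : V → ℝ)
    (hψ : ∀ v, ψ v = if v ∈ L then Real.sqrt (d v / volU)
      else if v ∈ R then -Real.sqrt (d v / volU) else 0)
    (𝓛 : Matrix V V ℝ)
    (h𝓛 : ∀ v u, 𝓛 v u = (if v = u then 1 else 0)
      - A v u / (Real.sqrt (d v) * Real.sqrt (d u))) :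
    2 - 2 * θ ≤ ψ ᵥ* 𝓛 ⬝ᵥ ψ :=
  rayleigh_lap_ge_of_bipartiteness_ratio_le_general A hA0 d hd hd0 L R hLR U hU volU hvolU hvolU0 eL
    eR eOut heL heR heOut θ hβ ψ hψ 𝓛 h𝓛
end

section
/- Truncation error bound: With q_t = χ_v Mᵗ (exact iterates) and r_t as in the truncated iteration (r_t = [r_{t-1}M]_{ξ_t} with ξ_t = ξ₀2ᵗ, r₀ = [χ_v]_{ξ₀} = χ_v for ξ₀ ≤ 1), for every t ≥ 0 and every vertex u, |r_t(u) - q_t(u)| ≤ ξ₀ · t · 2ᵗ · d(u). -/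
open Finset Matrix

/-- Truncation error bound: with exact iterates `q_t = χ_v Mᵗ` and truncated
iterates `r₀ = χ_v`, `r_{t+1} = [r_t M]_{ξ₀·2^{t+1}}`, we have
`|r_t(u) - q_t(u)| ≤ ξ₀ · t · 2ᵗ · d(u)` for all `t` and `u`. -/
theorem truncation_error_bound {V : Type*} [Fintype V] [DecidableEq V]
    (A : Matrix V V ℝ) (hA : A.IsSymm) (hA0 : ∀ v u, 0 ≤ A v u)
    (d : V → ℝ) (hd : ∀ v, d v = ∑ u, A v u) (hd0 : ∀ v, 0 < d v)
    (M : Matrix V V ℝ)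
    (hM : ∀ v u, M v u = (if v = u then 1 else 0) - A v u / d v)
    (ξ₀ : ℝ) (hξ₀ : 0 < ξ₀) (hξ₁ : ξ₀ ≤ 1) (v : V)
    (q r : ℕ → V → ℝ)
    (hq : ∀ t, q t = (Pi.single v (1 : ℝ)) ᵥ* M ^ t)
    (hr0 : r 0 = Pi.single v (1 : ℝ))
    (hr : ∀ t u, r (t + 1) u =
      if ξ₀ * 2 ^ (t + 1) * d u ≤ |(r t ᵥ* M) u| then (r t ᵥ* M) u else 0) :
    ∀ t : ℕ, ∀ u : V, |r t u - q t u| ≤ ξ₀ * t * 2 ^ t * d u := by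
  intro t
  induction t with
  | zero =>
    intro u
    simp [hr0, hq, Matrix.vecMul_one]
  | succ t ih =>
    intro u
    have hq' : q (t + 1) u = (q t ᵥ* M) u := by
      rw [hq, hq, pow_succ, ← Matrix.vecMul_vecMul]
    have hcolsum : ∑ w, A w u = d u := by
      rw [hd]
      exact Finset.sum_congr rfl fun w _ => by rw [← hA.apply u w]
    have key : |(r t ᵥ* M) u - (q t ᵥ* M) u| ≤ 2 * (ξ₀ * t * 2 ^ t) * d u := by
      have hsum : (r t ᵥ* M) u - (q t ᵥ* M) u = ∑ w, (r t w - q t w) * M w u := by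
        simp [Matrix.vecMul, dotProduct, sub_mul, Finset.sum_sub_distrib]
      rw [hsum]
      calc |∑ w, (r t w - q t w) * M w u| ≤ ∑ w, |(r t w - q t w) * M w u| :=
            Finset.abs_sum_le_sum_abs _ _
        _ ≤ ∑ w, (ξ₀ * t * 2 ^ t) * ((if w = u then 1 else 0) * d w + A w u) := by
            apply Finset.sum_le_sum
            intro w _
            rw [abs_mul]
            have h1 := ih w
            have hdw := hd0 w
            have h2 : |M w u| * d w ≤ (if w = u then 1 else 0) * d w + A w u := by
              rw [hM]
              have habs : |(if w = u then (1:ℝ) else 0) - A w u / d w| ≤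
                  (if w = u then (1:ℝ) else 0) + A w u / d w := by
                refine (abs_sub _ _).trans ?_
                gcongr <;>
                  [skip; exact le_of_eq (abs_of_nonneg (div_nonneg (hA0 w u) (hd0 w).le))]
                split <;> simp
              have := mul_le_mul_of_nonneg_right habs hdw.le
              calc |(if w = u then (1:ℝ) else 0) - A w u / d w| * d w
                  ≤ ((if w = u then (1:ℝ) else 0) + A w u / d w) * d w := this
                _ = (if w = u then 1 else 0) * d w + A w u := by
                    field_simp
            have hMnn : (0:ℝ) ≤ |M w u| := abs_nonneg _
            nlinarith [abs_nonneg (r t w - q t w), mul_le_mul h1 le_rfl hMnn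
              (mul_nonneg (mul_nonneg (mul_nonneg hξ₀.le t.cast_nonneg) (by positivity)) (hd0 w).le)]
        _ = (ξ₀ * t * 2 ^ t) * (d u + d u) := by
            rw [← Finset.mul_sum, Finset.sum_add_distrib, hcolsum]
            congr 2
            simp
        _ = 2 * (ξ₀ * t * 2 ^ t) * d u := by ring
    have htrunc : |r (t + 1) u - (r t ᵥ* M) u| ≤ ξ₀ * 2 ^ (t + 1) * d u := by
      rw [hr]
      split
      · simpa using mul_nonneg (mul_nonneg hξ₀.le (by positivity)) (hd0 u).le
      · next h =>
        rw [zero_sub, abs_neg]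
        exact (not_le.mp h).le
    have hfin : |r (t + 1) u - (q t ᵥ* M) u| ≤
        ξ₀ * 2 ^ (t + 1) * d u + 2 * (ξ₀ * t * 2 ^ t) * d u :=
      (abs_sub_le (r (t + 1) u) ((r t ᵥ* M) u) ((q t ᵥ* M) u)).trans
        (add_le_add htrunc key)
    rw [hq']
    refine hfin.trans (le_of_eq ?_)
    push_cast
    ring
end
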